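/- arXiv:math/0612736 — 6 statements merged into one kernel-verified Lean document; each statement's English description precedes it below -/
import Mathlib

section
/- Let k ≥ 3. The bottom of the spectrum of the k-cycle with the natural weights equals (1/2)|1 − e^{2πi/k}|²; explicitly, the infimum, over all nonconstant functions g : ZMod k → ℝ, of the Rayleigh quotient [Σ_{j ∈ ZMod k} (g(j+1) − g(j))²] / [2 · Σ_{j ∈ ZMod k} (g(j) − μ(g))²], where μ(g) = (1/k) Σ_{j ∈ ZMod k} g(j), is equal to 1 − cos(2π/k). -/
/-!
The characters `j ↦ exp (2πi jm/k)` of `ZMod k` diagonalize the shift: the discrete Fourier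
transform turns `g (j + 1) - g j` into `(exp (2πi m/k) - 1) • 𝓕 g m`, and for `m ≠ 0` the
squared modulus of this multiplier is `2 - 2 cos (2πm/k) ≥ 2 - 2 cos (2π/k)`. Since `𝓕 g 0` is
the sum of `g`, Parseval gives the lower bound for mean-zero `g`. The bound is attained by
`g j = cos (2πj/k)`: it satisfies `g (j + 1) + g (j - 1) = 2 cos (2π/k) g j`, so summation by
parts computes its Rayleigh quotient exactly, and the same relation forces `∑ j, g j = 0`.
-/

open Complex Finset ZMod
open scoped Real ComplexConjugate

lemma Real.cos_le_cos_of_le_of_le_two_pi_sub {a x : ℝ} (ha : 0 ≤ a) (hax : a ≤ x)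
    (hxa : x ≤ 2 * π - a) : Real.cos x ≤ Real.cos a := by
  rcases le_total x π with hx | hx
  · exact Real.cos_le_cos_of_nonneg_of_le_pi ha hx hax
  · rw [← Real.cos_two_pi_sub x]
    exact Real.cos_le_cos_of_nonneg_of_le_pi ha (by linarith) (by linarith)

lemma Real.cos_two_pi_div_lt_one {n : ℕ} (hn : 2 ≤ n) : Real.cos (2 * π / n) < 1 := by
  have hn' : (2 : ℝ) ≤ n := by exact_mod_cast hn
  rw [← Real.cos_zero]
  apply Real.cos_lt_cos_of_nonneg_of_le_pi le_rfl
  · rw [div_le_iff₀ (by linarith)]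
    nlinarith [Real.pi_pos]
  · positivity

namespace ZMod

variable {N : ℕ} [NeZero N]

lemma re_stdAddChar (j : ZMod N) : (stdAddChar j).re = Real.cos (2 * π * j.val / N) := by
  rw [stdAddChar_apply, toCircle_apply, ← exp_ofReal_mul_I_re]
  push_cast
  ring_nf

lemma re_stdAddChar_one : (stdAddChar (1 : ZMod N)).re = Real.cos (2 * π / N) := by
  rw [← Int.cast_one, stdAddChar_coe, ← exp_ofReal_mul_I_re]
  push_cast
  ring_nf

lemma re_stdAddChar_add_one_add_re_stdAddChar_sub_one (j : ZMod N) :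
    (stdAddChar (j + 1)).re + (stdAddChar (j - 1)).re =
      2 * Real.cos (2 * π / N) * (stdAddChar j).re := by
  rw [← re_stdAddChar_one, ← add_re, sub_eq_add_neg, AddChar.map_add_eq_mul,
    AddChar.map_add_eq_mul, AddChar.map_neg_eq_conj, ← mul_add, add_conj, re_mul_ofReal]
  ring

lemma re_stdAddChar_le {j : ZMod N} (hj : j ≠ 0) :
    (stdAddChar j).re ≤ Real.cos (2 * π / N) := by
  have hN : (0 : ℝ) < N := Nat.cast_pos.2 (NeZero.pos N)
  have hv : (1 : ℝ) ≤ j.val := by exact_mod_cast Nat.one_le_iff_ne_zero.2 ((val_ne_zero j).2 hj)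
  have hv' : (j.val : ℝ) + 1 ≤ N := by exact_mod_cast j.val_lt
  rw [re_stdAddChar]
  apply Real.cos_le_cos_of_le_of_le_two_pi_sub (by positivity)
  · exact div_le_div_of_nonneg_right (by nlinarith [Real.pi_pos]) hN.le
  · rw [le_sub_iff_add_le, ← add_div, div_le_iff₀ hN]
    nlinarith [Real.pi_pos]

lemma normSq_stdAddChar_sub_one (j : ZMod N) :
    normSq (stdAddChar j - 1) = 2 - 2 * (stdAddChar j).re := by
  rw [normSq_sub, stdAddChar_apply, Circle.normSq_coe]
  simp only [map_one, mul_one]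
  ring

variable {E : Type*} [AddCommGroup E] [Module ℂ E]

lemma dft_comp_add (Φ : ZMod N → E) (a k : ZMod N) :
    𝓕 (fun j ↦ Φ (j + a)) k = stdAddChar (a * k) • 𝓕 Φ k := by
  simp only [dft_apply, smul_sum, smul_smul, ← AddChar.map_add_eq_mul]
  exact Fintype.sum_equiv (Equiv.addRight a) _ _ fun j ↦ by
    simp only [Equiv.coe_addRight]
    ring_nf

lemma sum_normSq_dft (Φ : ZMod N → ℂ) :
    ∑ k, normSq (𝓕 Φ k) = N * ∑ j, normSq (Φ j) := by
  have hdual (j : ZMod N) : ∑ k, stdAddChar (j * k) * 𝓕 Φ k = N * Φ j := by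
    have := congr_fun (dft_dft Φ) (-j)
    rw [dft_apply] at this
    simp only [neg_neg, smul_eq_mul] at this
    rw [← this]
    exact sum_congr rfl fun k _ ↦ by ring_nf
  suffices (∑ k, normSq (𝓕 Φ k) : ℂ) = N * ∑ j, normSq (Φ j) by exact_mod_cast this
  push_cast [normSq_eq_conj_mul_self]
  calc ∑ k, conj (𝓕 Φ k) * 𝓕 Φ k
      = ∑ k, ∑ j, Φ j * conj (stdAddChar (j * k) * 𝓕 Φ k) := by
        refine sum_congr rfl fun k _ ↦ ?_
        nth_rw 2 [dft_apply]
        rw [mul_sum]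
        refine sum_congr rfl fun j _ ↦ ?_
        rw [map_mul, ← AddChar.map_neg_eq_conj, smul_eq_mul]
        ring
    _ = ∑ j, Φ j * conj (N * Φ j) := by
        rw [sum_comm]
        simp only [← mul_sum, ← map_sum, hdual]
    _ = N * ∑ j, conj (Φ j) * Φ j := by
        rw [mul_sum]
        exact sum_congr rfl fun j _ ↦ by rw [map_mul, Complex.conj_natCast]; ring

lemma two_sub_two_cos_mul_sum_sq_le_of_sum_eq_zero {y : ZMod N → ℝ} (hy : ∑ j, y j = 0) :
    (2 - 2 * Real.cos (2 * π / N)) * ∑ j, y j ^ 2 ≤ ∑ j, (y (j + 1) - y j) ^ 2 := by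
  set Φ : ZMod N → ℂ := fun j ↦ y j
  set ΔΦ : ZMod N → ℂ := fun j ↦ ((y (j + 1) - y j : ℝ) : ℂ)
  have hΦ0 : 𝓕 Φ 0 = 0 := by simp only [dft_apply_zero, Φ, ← ofReal_sum, hy, ofReal_zero]
  have hΔΦ (k : ZMod N) : 𝓕 ΔΦ k = (stdAddChar k - 1) * 𝓕 Φ k := by
    have : ΔΦ = (fun j ↦ Φ (j + 1)) - Φ := by ext j; simp [ΔΦ, Φ]
    rw [this, map_sub, Pi.sub_apply, dft_comp_add, one_mul, smul_eq_mul, sub_one_mul]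
  have hpointwise (k : ZMod N) :
      (2 - 2 * Real.cos (2 * π / N)) * normSq (𝓕 Φ k) ≤ normSq (𝓕 ΔΦ k) := by
    rcases eq_or_ne k 0 with rfl | hk
    · simpa [hΦ0] using normSq_nonneg _
    rw [hΔΦ, normSq_mul, normSq_stdAddChar_sub_one]
    exact mul_le_mul_of_nonneg_right (by linarith [re_stdAddChar_le hk]) (normSq_nonneg _)
  have hN : (0 : ℝ) < N := Nat.cast_pos.2 (NeZero.pos N)
  have := sum_le_sum fun k (_ : k ∈ univ) ↦ hpointwise k
  rw [← mul_sum, sum_normSq_dft, sum_normSq_dft] at this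
  simp only [Φ, ΔΦ, normSq_ofReal, ← sq] at this
  rw [mul_left_comm] at this
  exact le_of_mul_le_mul_left this hN

lemma one_sub_cos_mul_sum_sq_sub_mean_le (g : ZMod N → ℝ) :
    (1 - Real.cos (2 * π / N)) * (2 * ∑ j, (g j - (∑ i, g i) / N) ^ 2) ≤
      ∑ j, (g (j + 1) - g j) ^ 2 := by
  have hN : (N : ℝ) ≠ 0 := NeZero.ne _
  have hmean : ∑ j, (g j - (∑ i, g i) / N) = 0 := by
    rw [sum_sub_distrib, sum_const, card_univ, card, nsmul_eq_mul]
    field_simp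
    ring
  have := two_sub_two_cos_mul_sum_sq_le_of_sum_eq_zero hmean
  simp only [sub_sub_sub_cancel_right] at this
  linarith

end ZMod

lemma sum_sq_sub_pos_of_not_forall_eq {ι : Type*} [Fintype ι] {g : ι → ℝ}
    (hg : ¬∀ a b, g a = g b) (m : ℝ) : 0 < ∑ j, (g j - m) ^ 2 := by
  refine (sum_nonneg fun j _ ↦ sq_nonneg _).lt_of_ne fun h ↦ hg fun a b ↦ ?_
  have h0 := (sum_eq_zero_iff_of_nonneg fun j _ ↦ sq_nonneg (g j - m)).1 h.symm
  have ha := h0 a (mem_univ a)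
  have hb := h0 b (mem_univ b)
  rw [sq_eq_zero_iff, sub_eq_zero] at ha hb
  rw [ha, hb]

section EigenFunction

variable {G : Type*} [AddCommGroup G] [Fintype G]

lemma sum_sq_sub_comp_add (y : G → ℝ) (a : G) :
    ∑ j, (y (j + a) - y j) ^ 2 = ∑ j, y j * (2 * y j - y (j + a) - y (j - a)) := by
  have hsq : ∑ j, y (j + a) ^ 2 = ∑ j, y j ^ 2 := Equiv.sum_comp (Equiv.addRight a) (y · ^ 2)
  have hprod : ∑ j, y (j + a) * y j = ∑ j, y j * y (j - a) :=
    Fintype.sum_equiv (Equiv.addRight a) _ _ fun j ↦ by simp [mul_comm]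
  rw [← sub_eq_zero, ← sum_sub_distrib]
  calc ∑ j, ((y (j + a) - y j) ^ 2 - y j * (2 * y j - y (j + a) - y (j - a)))
      = (∑ j, y (j + a) ^ 2 - ∑ j, y j ^ 2) -
          (∑ j, y (j + a) * y j - ∑ j, y j * y (j - a)) := by
        simp only [← sum_sub_distrib]
        exact sum_congr rfl fun j _ ↦ by ring
    _ = 0 := by rw [hsq, hprod]; ring

variable {y : G → ℝ} {a : G} {c : ℝ}

lemma sum_sq_sub_comp_add_of_eigen (hy : ∀ j, y (j + a) + y (j - a) = 2 * c * y j) :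
    ∑ j, (y (j + a) - y j) ^ 2 = (2 - 2 * c) * ∑ j, y j ^ 2 := by
  rw [sum_sq_sub_comp_add, mul_sum]
  exact sum_congr rfl fun j _ ↦ by linear_combination (-y j) * hy j

lemma sum_eq_zero_of_eigen (hy : ∀ j, y (j + a) + y (j - a) = 2 * c * y j) (hc : c ≠ 1) :
    ∑ j, y j = 0 := by
  have hadd : ∑ j, y (j + a) = ∑ j, y j := Equiv.sum_comp (Equiv.addRight a) y
  have hsub : ∑ j, y (j - a) = ∑ j, y j := Equiv.sum_comp (Equiv.subRight a) y
  have h := sum_congr rfl fun j (_ : j ∈ univ) ↦ hy j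
  rw [sum_add_distrib, hadd, hsub, ← mul_sum] at h
  have : (1 - c) * ∑ j, y j = 0 := by linarith
  exact (mul_eq_zero.1 this).resolve_left (sub_ne_zero.2 hc.symm)

end EigenFunction

/-- the bottom of the spectrum of the k-cycle with the natural weights
equals (1/2)|1 − e^{2πi/k}|² = 1 − cos(2π/k). -/
theorem cycle_bottom_of_spectrum (k : ℕ) [NeZero k] (hk : 3 ≤ k) :
    sInf ((fun g : ZMod k → ℝ =>
        (∑ j : ZMod k, (g (j + 1) - g j) ^ 2) /
          (2 * ∑ j : ZMod k, (g j - (∑ i : ZMod k, g i) / (k : ℝ)) ^ 2)) ''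
      {g | ¬ ∀ a b, g a = g b}) = 1 - Real.cos (2 * Real.pi / k) := by
  refine IsLeast.csInf_eq ⟨?_, ?_⟩
  · set g : ZMod k → ℝ := fun j ↦ (stdAddChar j).re
    have hc := Real.cos_two_pi_div_lt_one (n := k) (by omega)
    have heig : ∀ j, g (j + 1) + g (j - 1) = 2 * Real.cos (2 * π / k) * g j :=
      re_stdAddChar_add_one_add_re_stdAddChar_sub_one
    have hsum : ∑ j, g j = 0 := sum_eq_zero_of_eigen heig hc.ne
    have hg : ¬∀ a b, g a = g b := fun h ↦ by
      have h01 := h 0 1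
      simp only [g, AddChar.map_zero_eq_one, one_re, re_stdAddChar_one] at h01
      linarith
    refine ⟨g, hg, ?_⟩
    have hpos := sum_sq_sub_pos_of_not_forall_eq hg 0
    simp only [sub_zero] at hpos
    simp only [hsum, zero_div, sub_zero, sum_sq_sub_comp_add_of_eigen heig]
    field_simp
  · rintro _ ⟨g, hg, rfl⟩
    have hpos := sum_sq_sub_pos_of_not_forall_eq hg ((∑ i, g i) / k)
    rw [le_div_iff₀ (by positivity)]
    exact one_sub_cos_mul_sum_sq_sub_mean_le g
end

section
/- Let P (points) and L (lines) be the finite nonempty types of a projective plane of order n (n ≥ 2), so that every point lies on exactly n+1 lines, every line contains exactly n+1 points, and |P| = |L| = n² + n + 1. Consider the incidence graph on the vertex set P ⊕ L, with an edge between p ∈ P and ℓ ∈ L whenever p lies on ℓ; it is regular of valence n+1. Then the bottom of the spectrum of this graph with values in ℝ equals 1 − √n/(n+1); explicitly, the infimum over all nonconstant g : P ⊕ L → ℝ of [Σ_{(p,ℓ) : p ∈ ℓ} (g(p) − g(ℓ))²] / [(n+1) · Σ_{x ∈ P ⊕ L} (g(x) − μ(g))²], where μ(g) is the mean of g over P ⊕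 L, equals 1 − √n/(n+1). -/
open Configuration Finset

set_option linter.unusedSectionVars false
set_option maxHeartbeats 1000000

section
variable {P L : Type*} [Fintype P] [Fintype L] [Membership P L]
  [ProjectivePlane P L] [∀ l : L, DecidablePred (· ∈ l)]
  {n : ℕ}

lemma card_lines_through (horder : ProjectivePlane.order P L = n) (p : P) :
    (univ.filter fun l : L => p ∈ l).card = n + 1 := by
  classical
  rw [← Fintype.card_subtype, ← Nat.card_eq_fintype_card, ← horder]
  exact ProjectivePlane.lineCount_eq L p

lemma card_points_on (horder : ProjectivePlane.order P L = n) (l : L) :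
    (univ.filter fun p : P => p ∈ l).card = n + 1 := by
  classical
  rw [← Fintype.card_subtype, ← Nat.card_eq_fintype_card, ← horder]
  exact ProjectivePlane.pointCount_eq P l

lemma card_points_on_two {l₁ l₂ : L} (h : l₁ ≠ l₂) :
    (univ.filter fun p : P => p ∈ l₁ ∧ p ∈ l₂).card = 1 := by
  classical
  obtain ⟨p, hp, hpu⟩ := HasPoints.existsUnique_point P L l₁ l₂ h
  rw [Finset.card_eq_one]
  refine ⟨p, ?_⟩
  ext q
  simp only [mem_filter, mem_univ, true_and, mem_singleton]
  exact ⟨fun hq => hpu q hq, fun hq => hq ▸ hp⟩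

lemma card_lines_through_two {p₁ p₂ : P} (h : p₁ ≠ p₂) :
    (univ.filter fun l : L => p₁ ∈ l ∧ p₂ ∈ l).card = 1 := by
  classical
  obtain ⟨l, hl, hlu⟩ := HasLines.existsUnique_line P L p₁ p₂ h
  rw [Finset.card_eq_one]
  refine ⟨l, ?_⟩
  ext m
  simp only [mem_filter, mem_univ, true_and, mem_singleton]
  exact ⟨fun hm => hlu m hm, fun hm => hm ▸ hl⟩

lemma degL (horder : ProjectivePlane.order P L = n) (p : P) (c : ℝ) :
    ∑ l : L, (if p ∈ l then c else 0) = ((n : ℝ) + 1) * c := by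
  rw [Finset.sum_ite, Finset.sum_const, Finset.sum_const_zero, add_zero,
    card_lines_through horder, nsmul_eq_mul]
  push_cast; ring

lemma degP (horder : ProjectivePlane.order P L = n) (l : L) (c : ℝ) :
    ∑ p : P, (if p ∈ l then c else 0) = ((n : ℝ) + 1) * c := by
  rw [Finset.sum_ite, Finset.sum_const, Finset.sum_const_zero, add_zero,
    card_points_on horder, nsmul_eq_mul]
  push_cast; ring

lemma crossL [DecidableEq L] (horder : ProjectivePlane.order P L = n) (l l' : L) :
    ∑ p : P, ((if p ∈ l then (1 : ℝ) else 0) * (if p ∈ l' then 1 else 0)) =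
      if l = l' then (n : ℝ) + 1 else 1 := by
  classical
  by_cases h : l = l'
  · subst h
    rw [if_pos rfl]
    have h1 : ∀ p : P, ((if p ∈ l then (1 : ℝ) else 0) * (if p ∈ l then 1 else 0))
        = if p ∈ l then (1:ℝ) else 0 := by
      intro p; by_cases hp : p ∈ l <;> simp [hp]
    rw [Finset.sum_congr rfl fun p _ => h1 p, degP horder l 1, mul_one]
  · rw [if_neg h]
    have h1 : ∀ p : P, ((if p ∈ l then (1 : ℝ) else 0) * (if p ∈ l' then 1 else 0))
        = if p ∈ l ∧ p ∈ l' then (1:ℝ) else 0 := by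
      intro p; by_cases hp : p ∈ l <;> by_cases hp' : p ∈ l' <;> simp [hp, hp']
    rw [Finset.sum_congr rfl fun p _ => h1 p, Finset.sum_boole, card_points_on_two h]
    norm_num

lemma sum_sq_row [DecidableEq L] (horder : ProjectivePlane.order P L = n) (v : L → ℝ) :
    ∑ p : P, (∑ l : L, if p ∈ l then v l else 0) ^ 2
      = (∑ l : L, v l) ^ 2 + n * ∑ l : L, (v l) ^ 2 := by
  classical
  have key : ∀ p : P, (∑ l : L, if p ∈ l then v l else 0) ^ 2
      = ∑ l : L, ∑ l' : L, v l * v l' *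
          ((if p ∈ l then (1:ℝ) else 0) * (if p ∈ l' then 1 else 0)) := by
    intro p
    rw [sq, Finset.sum_mul_sum]
    refine Finset.sum_congr rfl fun l _ => Finset.sum_congr rfl fun l' _ => ?_
    by_cases h1 : p ∈ l <;> by_cases h2 : p ∈ l' <;> simp [h1, h2]
  rw [Finset.sum_congr rfl fun p _ => key p]
  rw [Finset.sum_comm]
  have h0 : ∀ l : L, ∑ p : P, ∑ l' : L, v l * v l' *
        ((if p ∈ l then (1:ℝ) else 0) * (if p ∈ l' then 1 else 0))
      = ∑ l' : L, (v l * v l' + if l = l' then (n:ℝ) * (v l * v l') else 0) := by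
    intro l
    rw [Finset.sum_comm]
    refine Finset.sum_congr rfl fun l' _ => ?_
    rw [← Finset.mul_sum, crossL horder l l']
    by_cases h : l = l' <;> simp [h] <;> ring
  rw [Finset.sum_congr rfl fun l _ => h0 l]
  have h1 : ∀ l : L, ∑ l' : L, (v l * v l' + if l = l' then (n:ℝ) * (v l * v l') else 0)
      = v l * (∑ l' : L, v l') + (n:ℝ) * (v l)^2 := by
    intro l
    rw [Finset.sum_add_distrib, ← Finset.mul_sum, Finset.sum_ite_eq, if_pos (Finset.mem_univ l)]
    ring
  rw [Finset.sum_congr rfl fun l _ => h1 l, Finset.sum_add_distrib, ← Finset.sum_mul,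
    ← Finset.mul_sum, sq]

lemma cardP_pos (horder : ProjectivePlane.order P L = n) (hn : 2 ≤ n) :
    0 < Fintype.card P := by
  rw [ProjectivePlane.card_points P L, horder]; positivity

lemma key_ineq [DecidableEq L] (horder : ProjectivePlane.order P L = n)
    (hn : 2 ≤ n) (u : P → ℝ) (v : L → ℝ)
    (hsum : (∑ p : P, u p) + (∑ l : L, v l) = 0) :
    2 * (∑ p : P, ∑ l : L, if p ∈ l then u p * v l else 0)
      ≤ Real.sqrt n * ((∑ p : P, (u p) ^ 2) + (∑ l : L, (v l) ^ 2)) := by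
  classical
  set N : ℝ := (Fintype.card P : ℝ) with hNdef
  have hN : 0 < N := by rw [hNdef]; exact_mod_cast cardP_pos horder hn
  have hcardL : ((Fintype.card L : ℕ) : ℝ) = N := by
    rw [hNdef, ProjectivePlane.card_points_eq_card_lines P L]
  set a : ℝ := (∑ p : P, u p) / N with hadef
  set u₀ : P → ℝ := fun p => u p - a with hu₀def
  set v₀ : L → ℝ := fun l => v l + a with hv₀def
  have hNa : N * a = ∑ p : P, u p := by rw [hadef]; field_simp
  have hu₀ : ∑ p : P, u₀ p = 0 := by
    simp only [hu₀def, Finset.sum_sub_distrib, Finset.sum_const, Finset.card_univ,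
      nsmul_eq_mul]
    rw [← hNdef] at *
    linarith [hNa]
  have hv₀ : ∑ l : L, v₀ l = 0 := by
    simp only [hv₀def, Finset.sum_add_distrib, Finset.sum_const, Finset.card_univ,
      nsmul_eq_mul, hcardL]
    linarith [hNa]
  set w : P → ℝ := fun p => ∑ l : L, if p ∈ l then v₀ l else 0 with hwdef
  have hw : ∑ p : P, (w p) ^ 2 = (n : ℝ) * ∑ l : L, (v₀ l) ^ 2 := by
    rw [hwdef]
    simp only []
    rw [sum_sq_row horder v₀, hv₀]
    ring
  set S1 : ℝ := ∑ p : P, u₀ p * w p with hS1def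
  have hsplit : (∑ p : P, ∑ l : L, if p ∈ l then u p * v l else 0)
      = S1 - a ^ 2 * (((n:ℝ)+1) * N) := by
    have e1 : ∀ (p : P) (l : L), (if p ∈ l then u p * v l else 0)
        = (if p ∈ l then u₀ p * v₀ l else 0) + (-a) * (if p ∈ l then u₀ p else 0)
          + a * (if p ∈ l then v₀ l else 0) + (-(a^2)) * (if p ∈ l then (1:ℝ) else 0) := by
      intro p l
      by_cases h : p ∈ l <;> simp [h, hu₀def, hv₀def] <;> ring
    simp only [e1, Finset.sum_add_distrib, ← Finset.mul_sum]
    have e2 : ∑ p : P, ∑ l : L, (if p ∈ l then u₀ p else 0) = 0 := by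
      rw [Finset.sum_congr rfl fun p _ => degL horder p (u₀ p), ← Finset.mul_sum, hu₀, mul_zero]
    have e3 : ∑ p : P, ∑ l : L, (if p ∈ l then v₀ l else 0) = 0 := by
      rw [Finset.sum_comm, Finset.sum_congr rfl fun l _ => degP horder l (v₀ l),
        ← Finset.mul_sum, hv₀, mul_zero]
    have e4 : ∑ p : P, ∑ l : L, (if p ∈ l then (1:ℝ) else 0) = ((n:ℝ)+1) * N := by
      rw [Finset.sum_congr rfl fun p _ => degL horder p 1, Finset.sum_const,
        Finset.card_univ, nsmul_eq_mul, ← hNdef]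
      ring
    have e5 : ∑ p : P, ∑ l : L, (if p ∈ l then u₀ p * v₀ l else 0) = S1 := by
      rw [hS1def]
      refine Finset.sum_congr rfl fun p _ => ?_
      rw [Finset.mul_sum]
      refine Finset.sum_congr rfl fun l _ => ?_
      by_cases h : p ∈ l <;> simp [h]
    rw [e2, e3, e4, e5]
    ring
  have hCS : S1 ^ 2 ≤ (∑ p : P, (u₀ p)^2) * ((n:ℝ) * ∑ l : L, (v₀ l)^2) := by
    rw [← hw, hS1def]
    exact Finset.sum_mul_sq_le_sq_mul_sq Finset.univ u₀ w
  set U : ℝ := ∑ p : P, (u₀ p)^2 with hUdef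
  set V : ℝ := ∑ l : L, (v₀ l)^2 with hVdef
  have hU : 0 ≤ U := Finset.sum_nonneg fun p _ => sq_nonneg _
  have hV : 0 ≤ V := Finset.sum_nonneg fun l _ => sq_nonneg _
  set s : ℝ := Real.sqrt n with hsdef
  have hs0 : 0 ≤ s := Real.sqrt_nonneg _
  have hs2 : s ^ 2 = (n : ℝ) := Real.sq_sqrt (by positivity)
  have h2S1 : 2 * S1 ≤ s * (U + V) := by
    rcases le_or_gt S1 0 with h | h
    · nlinarith [mul_nonneg hs0 (add_nonneg hU hV)]
    · have hCS' : S1 ^ 2 ≤ U * (s ^ 2 * V) := by rw [hs2]; exact hCS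
      have h6 : 0 < 2 * S1 + s * (U + V) := by
        have := mul_nonneg hs0 (add_nonneg hU hV); linarith
      nlinarith [hCS', sq_nonneg (s * (U - V)), h6]
  have hu2 : ∑ p : P, (u p)^2 = U + a^2 * N := by
    have : ∀ p : P, (u p)^2 = (u₀ p)^2 + 2 * a * u₀ p + a^2 := by
      intro p; rw [hu₀def]; ring
    rw [Finset.sum_congr rfl fun p _ => this p]
    simp only [Finset.sum_add_distrib, Finset.sum_const, Finset.card_univ, nsmul_eq_mul,
      ← Finset.mul_sum, hu₀, ← hNdef, hUdef]
    ring
  have hv2 : ∑ l : L, (v l)^2 = V + a^2 * N := by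
    have : ∀ l : L, (v l)^2 = (v₀ l)^2 - 2 * a * v₀ l + a^2 := by
      intro l; rw [hv₀def]; ring
    rw [Finset.sum_congr rfl fun l _ => this l]
    simp only [Finset.sum_add_distrib, Finset.sum_sub_distrib, Finset.sum_const,
      Finset.card_univ, nsmul_eq_mul, ← Finset.mul_sum, hv₀, hcardL, hVdef]
    ring
  rw [hsplit, hu2, hv2]
  have ha2 : 0 ≤ a^2 * N := by positivity
  nlinarith [mul_nonneg hs0 (mul_nonneg (sq_nonneg a) hN.le)]

lemma num_expand (horder : ProjectivePlane.order P L = n) (u : P → ℝ) (v : L → ℝ) :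
    ∑ p : P, ∑ l : L, (if p ∈ l then (u p - v l)^2 else 0)
      = ((n:ℝ)+1) * (∑ p : P, (u p)^2) + ((n:ℝ)+1) * (∑ l : L, (v l)^2)
        - 2 * ∑ p : P, ∑ l : L, (if p ∈ l then u p * v l else 0) := by
  have e1 : ∀ (p : P) (l : L), (if p ∈ l then (u p - v l)^2 else 0)
      = (if p ∈ l then (u p)^2 else 0) + (if p ∈ l then (v l)^2 else 0)
        - 2 * (if p ∈ l then u p * v l else 0) := by
    intro p l; by_cases h : p ∈ l <;> simp [h] <;> ring
  simp only [e1, Finset.sum_add_distrib, Finset.sum_sub_distrib, ← Finset.mul_sum]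
  have e2 : ∑ p : P, ∑ l : L, (if p ∈ l then (u p)^2 else 0) = ((n:ℝ)+1) * ∑ p : P, (u p)^2 := by
    rw [Finset.sum_congr rfl fun p _ => degL horder p ((u p)^2), ← Finset.mul_sum]
  have e3 : ∑ p : P, ∑ l : L, (if p ∈ l then (v l)^2 else 0) = ((n:ℝ)+1) * ∑ l : L, (v l)^2 := by
    rw [Finset.sum_comm, Finset.sum_congr rfl fun l _ => degP horder l ((v l)^2),
      ← Finset.mul_sum]
  rw [e2, e3]

end

open Configuration

/-- Feit–Higman: the bottom of the spectrum of the incidence graph of a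
projective plane of order n (a generalized triangle of valence n+1) equals
1 − √n/(n−1+2) = 1 − √n/(n+1). -/
theorem incidence_graph_bottom_of_spectrum
    (P L : Type*) [Fintype P] [Fintype L] [Membership P L]
    [ProjectivePlane P L] [∀ l : L, DecidablePred (· ∈ l)]
    (n : ℕ) (hn : 2 ≤ n) (horder : ProjectivePlane.order P L = n) :
    sInf ((fun g : P ⊕ L → ℝ =>
        (∑ p : P, ∑ l : L, if p ∈ l then (g (Sum.inl p) - g (Sum.inr l)) ^ 2 else 0) /
          (((n : ℝ) + 1) * ∑ x : P ⊕ L,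
            (g x - (∑ y : P ⊕ L, g y) / (Fintype.card (P ⊕ L) : ℝ)) ^ 2)) ''
      {g | ¬ ∀ a b, g a = g b}) = 1 - Real.sqrt n / ((n : ℝ) + 1) := by
  classical
  set s : ℝ := Real.sqrt n with hsdef
  have hs0 : 0 ≤ s := Real.sqrt_nonneg _
  have hs2 : s ^ 2 = (n : ℝ) := Real.sq_sqrt (by positivity)
  have hn1 : (0:ℝ) < (n:ℝ) + 1 := by positivity
  have hcard : (0:ℕ) < Fintype.card (P ⊕ L) := by
    rw [Fintype.card_sum]
    have := cardP_pos horder hn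
    omega
  have hcardR : (0:ℝ) < (Fintype.card (P ⊕ L) : ℝ) := by exact_mod_cast hcard
  set F : (P ⊕ L → ℝ) → ℝ := fun g =>
      (∑ p : P, ∑ l : L, if p ∈ l then (g (Sum.inl p) - g (Sum.inr l)) ^ 2 else 0) /
        (((n : ℝ) + 1) * ∑ x : P ⊕ L,
          (g x - (∑ y : P ⊕ L, g y) / (Fintype.card (P ⊕ L) : ℝ)) ^ 2) with hFdef
  -- lower bound
  have hlb : ∀ g : P ⊕ L → ℝ, (¬ ∀ a b, g a = g b) → 1 - s / ((n:ℝ)+1) ≤ F g := by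
    intro g hg
    set μ : ℝ := (∑ y : P ⊕ L, g y) / (Fintype.card (P ⊕ L) : ℝ) with hμdef
    set u : P → ℝ := fun p => g (Sum.inl p) - μ with hudef
    set v : L → ℝ := fun l => g (Sum.inr l) - μ with hvdef
    have hsum0 : (∑ p : P, u p) + (∑ l : L, v l) = 0 := by
      have h1 : (∑ p : P, u p) + (∑ l : L, v l) = ∑ x : P ⊕ L, (g x - μ) := by
        rw [Fintype.sum_sum_type]
      rw [h1, Finset.sum_sub_distrib, Finset.sum_const, Finset.card_univ, nsmul_eq_mul, hμdef,
        mul_div_cancel₀ _ (ne_of_gt hcardR), sub_self]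
    have hD : ∑ x : P ⊕ L, (g x - μ) ^ 2 = (∑ p : P, (u p)^2) + (∑ l : L, (v l)^2) := by
      rw [Fintype.sum_sum_type]
    set U : ℝ := ∑ p : P, (u p)^2 with hUdef
    set V : ℝ := ∑ l : L, (v l)^2 with hVdef
    have hDpos : 0 < U + V := by
      rcases (lt_or_eq_of_le (Finset.sum_nonneg (fun (x : P ⊕ L) _ => sq_nonneg (g x - μ)))) with h | h
      · rw [hD] at h; exact h
      · exfalso
        apply hg
        have hzero : ∀ x : P ⊕ L, (g x - μ) ^ 2 = 0 := by
          intro x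
          have := Finset.sum_eq_zero_iff_of_nonneg
            (fun (x : P ⊕ L) _ => sq_nonneg (g x - μ)) |>.mp h.symm
          exact this x (Finset.mem_univ x)
        intro a b
        have ha := sub_eq_zero.mp (pow_eq_zero_iff (n := 2) (by norm_num) |>.mp (hzero a))
        have hb := sub_eq_zero.mp (pow_eq_zero_iff (n := 2) (by norm_num) |>.mp (hzero b))
        rw [ha, hb]
    have hnum : (∑ p : P, ∑ l : L, if p ∈ l then (g (Sum.inl p) - g (Sum.inr l)) ^ 2 else 0)
        = ((n:ℝ)+1) * U + ((n:ℝ)+1) * V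
          - 2 * ∑ p : P, ∑ l : L, (if p ∈ l then u p * v l else 0) := by
      have e : ∀ (p : P) (l : L), (if p ∈ l then (g (Sum.inl p) - g (Sum.inr l)) ^ 2 else 0)
          = (if p ∈ l then (u p - v l) ^ 2 else 0) := by
        intro p l
        have : g (Sum.inl p) - g (Sum.inr l) = u p - v l := by rw [hudef, hvdef]; ring
        rw [this]
      rw [Finset.sum_congr rfl fun p _ => Finset.sum_congr rfl fun l _ => e p l,
        num_expand horder u v, hUdef, hVdef]
    have hkey := key_ineq horder hn u v hsum0
    have hkey' : 2 * (∑ p : P, ∑ l : L, if p ∈ l then u p * v l else 0) ≤ s * (U + V) := by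
      rw [hUdef, hVdef, hsdef]; exact hkey
    rw [hFdef]
    simp only []
    rw [← hμdef, hD, hnum, le_div_iff₀ (by positivity)]
    have hs_cancel : (1 - s / ((n:ℝ)+1)) * (((n:ℝ)+1) * (U + V))
        = ((n:ℝ)+1) * (U + V) - s * (U + V) := by
      field_simp
    rw [hs_cancel]
    linarith [hkey']
  -- witness
  obtain ⟨p₀, p₁, hp01⟩ := Fintype.exists_pair_of_one_lt_card
    (by have := cardP_pos horder hn
        rw [ProjectivePlane.card_points P L, horder]
        nlinarith : 1 < Fintype.card P)
  set g₀ : P ⊕ L → ℝ := fun x => Sum.elim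
      (fun p => s * ((if p = p₀ then (1:ℝ) else 0) - (if p = p₁ then 1 else 0)))
      (fun l => (if p₀ ∈ l then (1:ℝ) else 0) - (if p₁ ∈ l then 1 else 0)) x with hg₀def
  have hspos : 0 < s := Real.sqrt_pos.mpr (by positivity)
  have hg₀nc : ¬ ∀ a b, g₀ a = g₀ b := by
    intro h
    have := h (Sum.inl p₀) (Sum.inl p₁)
    rw [hg₀def] at this
    simp [hp01, Ne.symm hp01] at this
    linarith
  set u : P → ℝ := fun p => s * ((if p = p₀ then (1:ℝ) else 0) - (if p = p₁ then 1 else 0))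
    with hudef
  set v : L → ℝ := fun l => (if p₀ ∈ l then (1:ℝ) else 0) - (if p₁ ∈ l then 1 else 0) with hvdef
  have hsumu : ∑ p : P, u p = 0 := by
    rw [hudef]
    simp only [Finset.sum_sub_distrib, ← Finset.mul_sum, Finset.sum_ite_eq',
      Finset.mem_univ, if_true]
    simp
  have hsumv : ∑ l : L, v l = 0 := by
    rw [hvdef]
    simp only [Finset.sum_sub_distrib, Finset.sum_boole]
    rw [card_lines_through horder p₀, card_lines_through horder p₁]
    ring
  have hU : ∑ p : P, (u p) ^ 2 = 2 * (n:ℝ) := by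
    have e : ∀ p : P, (u p)^2
        = (n:ℝ) * ((if p = p₀ then (1:ℝ) else 0) + (if p = p₁ then 1 else 0)) := by
      intro p
      rcases eq_or_ne p p₀ with h0 | h0
      · subst h0
        simp [hudef, hp01, Ne.symm hp01]
        linear_combination hs2
      · rcases eq_or_ne p p₁ with h1 | h1
        · subst h1
          simp [hudef, hp01, Ne.symm hp01, h0]
          linear_combination hs2
        · simp [hudef, h0, h1]
    rw [Finset.sum_congr rfl fun p _ => e p, ← Finset.mul_sum]
    simp only [Finset.sum_add_distrib, Finset.sum_ite_eq', Finset.mem_univ, if_true]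
    ring
  have hV : ∑ l : L, (v l) ^ 2 = 2 * (n:ℝ) := by
    have e : ∀ l : L, (v l)^2
        = (if p₀ ∈ l then (1:ℝ) else 0) + (if p₁ ∈ l then 1 else 0)
          - 2 * (if p₀ ∈ l ∧ p₁ ∈ l then (1:ℝ) else 0) := by
      intro l
      rw [hvdef]
      by_cases h0 : p₀ ∈ l <;> by_cases h1 : p₁ ∈ l <;> simp [h0, h1] <;> ring
    rw [Finset.sum_congr rfl fun l _ => e l]
    simp only [Finset.sum_sub_distrib, Finset.sum_add_distrib, ← Finset.mul_sum,
      Finset.sum_boole]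
    rw [card_lines_through horder p₀, card_lines_through horder p₁, card_lines_through_two hp01]
    push_cast
    ring
  have hB : ∑ p : P, ∑ l : L, (if p ∈ l then u p * v l else 0) = s * (2 * (n:ℝ)) := by
    rw [Finset.sum_comm]
    have inner : ∀ l : L, ∑ p : P, (if p ∈ l then u p * v l else 0) = s * v l * v l := by
      intro l
      have e : ∀ p : P, (if p ∈ l then u p * v l else 0)
          = s * v l * ((if p = p₀ then (if p ∈ l then (1:ℝ) else 0) else 0)
            - (if p = p₁ then (if p ∈ l then (1:ℝ) else 0) else 0)) := by
        intro p
        rcases eq_or_ne p p₀ with h0 | h0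
        · subst h0
          by_cases h : p ∈ l
          · simp only [hudef, hvdef]
            simp [hp01, Ne.symm hp01, h]
            try ring
          · simp only [hudef, hvdef]
            simp [hp01, Ne.symm hp01, h]
            try ring
        · rcases eq_or_ne p p₁ with h1 | h1
          · subst h1
            by_cases h : p ∈ l
            · simp only [hudef, hvdef]
              simp [hp01, Ne.symm hp01, h0, h]
              try ring
            · simp only [hudef, hvdef]
              simp [hp01, Ne.symm hp01, h0, h]
              try ring
          · by_cases h : p ∈ l <;> simp [hudef, h0, h1, h]
      rw [Finset.sum_congr rfl fun p _ => e p, ← Finset.mul_sum, Finset.sum_sub_distrib,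
        Finset.sum_ite_eq', Finset.sum_ite_eq', if_pos (Finset.mem_univ p₀),
        if_pos (Finset.mem_univ p₁), hvdef]
    rw [Finset.sum_congr rfl fun l _ => inner l]
    have : ∀ l : L, s * v l * v l = s * (v l)^2 := fun l => by ring
    rw [Finset.sum_congr rfl fun l _ => this l, ← Finset.mul_sum, hV]
  have hFg₀ : F g₀ = 1 - s / ((n:ℝ)+1) := by
    have hμ0 : (∑ y : P ⊕ L, g₀ y) = 0 := by
      rw [Fintype.sum_sum_type]
      have h1 : ∑ p : P, g₀ (Sum.inl p) = ∑ p : P, u p := rfl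
      have h2 : ∑ l : L, g₀ (Sum.inr l) = ∑ l : L, v l := rfl
      rw [h1, h2, hsumu, hsumv, add_zero]
    have hDen : ∑ x : P ⊕ L, (g₀ x - (∑ y : P ⊕ L, g₀ y) / (Fintype.card (P ⊕ L) : ℝ)) ^ 2
        = 4 * (n:ℝ) := by
      rw [hμ0]
      simp only [zero_div, sub_zero]
      rw [Fintype.sum_sum_type]
      have h1 : ∑ p : P, (g₀ (Sum.inl p))^2 = ∑ p : P, (u p)^2 := rfl
      have h2 : ∑ l : L, (g₀ (Sum.inr l))^2 = ∑ l : L, (v l)^2 := rfl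
      rw [h1, h2, hU, hV]; ring
    have hNum : (∑ p : P, ∑ l : L, if p ∈ l then (g₀ (Sum.inl p) - g₀ (Sum.inr l)) ^ 2 else 0)
        = ((n:ℝ)+1) * (2*(n:ℝ)) + ((n:ℝ)+1) * (2*(n:ℝ)) - 2 * (s * (2*(n:ℝ))) := by
      have e : ∀ (p : P) (l : L), (if p ∈ l then (g₀ (Sum.inl p) - g₀ (Sum.inr l)) ^ 2 else 0)
          = (if p ∈ l then (u p - v l) ^ 2 else 0) := fun p l => rfl
      rw [Finset.sum_congr rfl fun p _ => Finset.sum_congr rfl fun l _ => e p l,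
        num_expand horder u v, hU, hV, hB]
    rw [hFdef]
    simp only []
    rw [hNum, hDen]
    have hne1 : ((n:ℝ)+1) ≠ 0 := ne_of_gt hn1
    have hne2 : (n:ℝ) ≠ 0 := by positivity
    field_simp
    ring
  -- conclude
  have hIsLeast : IsLeast ((fun g : P ⊕ L → ℝ =>
      (∑ p : P, ∑ l : L, if p ∈ l then (g (Sum.inl p) - g (Sum.inr l)) ^ 2 else 0) /
        (((n : ℝ) + 1) * ∑ x : P ⊕ L,
          (g x - (∑ y : P ⊕ L, g y) / (Fintype.card (P ⊕ L) : ℝ)) ^ 2)) ''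
      {g | ¬ ∀ a b, g a = g b}) (1 - s / ((n:ℝ)+1)) := by
    constructor
    · exact ⟨g₀, hg₀nc, hFg₀⟩
    · rintro y ⟨g, hg, rfl⟩
      exact hlb g hg
  rw [hIsLeast.csInf_eq, hsdef]
end

section
/- For n ≥ 2 and d ≥ 1, the spectral gap function λ on d-tuples of permutations of Fin n is Lipschitz in the following sense: if σ = (σ₁, …, σ_d) and σ' = (σ'₁, …, σ'_d) are two d-tuples of permutations of Fin n that agree in all but one coordinate, then |λ(σ) − λ(σ')| ≤ 4/d. -/
open Finset

private lemma sum_sq_perm_le (n : ℕ) (g : Fin n → ℝ) (τ : Equiv.Perm (Fin n)) :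
    ∑ s : Fin n, (g s - g (τ s)) ^ 2 ≤
      4 * ∑ s : Fin n, (g s - (∑ t : Fin n, g t) / (n : ℝ)) ^ 2 := by
  set μ := (∑ t : Fin n, g t) / (n : ℝ) with hμ
  have h1 : ∀ s, (g s - g (τ s)) ^ 2 ≤ 2 * (g s - μ)^2 + 2 * (g (τ s) - μ)^2 := by
    intro s; nlinarith [sq_nonneg (g s + g (τ s) - 2*μ)]
  calc ∑ s : Fin n, (g s - g (τ s))^2
      ≤ ∑ s : Fin n, (2*(g s - μ)^2 + 2*(g (τ s) - μ)^2) :=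
        Finset.sum_le_sum fun s _ => h1 s
    _ = 2 * ∑ s : Fin n, (g s - μ)^2 + 2 * ∑ s : Fin n, (g (τ s) - μ)^2 := by
        rw [Finset.sum_add_distrib, Finset.mul_sum, Finset.mul_sum]
    _ = 4 * ∑ s : Fin n, (g s - μ)^2 := by
        have h2 : ∑ s : Fin n, (g (τ s) - μ)^2 = ∑ s : Fin n, (g s - μ)^2 :=
          Equiv.sum_comp τ (fun s => (g s - μ)^2)
        rw [h2]; ring

private lemma rayleigh_diff (n d : ℕ) (hd : 1 ≤ d)
    (σ σ' : Fin d → Equiv.Perm (Fin n)) (i₀ : Fin d)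
    (hagree : ∀ i, i ≠ i₀ → σ i = σ' i) (g : Fin n → ℝ) (hg : ¬ ∀ a b, g a = g b) :
    (∑ s : Fin n, ∑ i : Fin d, (g s - g (σ i s)) ^ 2) /
        (2 * (d : ℝ) * ∑ s : Fin n, (g s - (∑ t : Fin n, g t) / (n : ℝ)) ^ 2) ≤
    (∑ s : Fin n, ∑ i : Fin d, (g s - g (σ' i s)) ^ 2) /
        (2 * (d : ℝ) * ∑ s : Fin n, (g s - (∑ t : Fin n, g t) / (n : ℝ)) ^ 2) + 2 / d := by
  set μ := (∑ t : Fin n, g t) / (n : ℝ) with hμ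
  set D := ∑ s : Fin n, (g s - μ)^2 with hD
  have hDpos : 0 < D := by
    rcases not_forall.mp hg with ⟨a, ha⟩
    rcases not_forall.mp ha with ⟨b, hab⟩
    by_contra h
    push_neg at h
    have hz : D = 0 := le_antisymm h (Finset.sum_nonneg fun s _ => sq_nonneg _)
    have hall := (Finset.sum_eq_zero_iff_of_nonneg
      (fun s (_ : s ∈ Finset.univ) => sq_nonneg (g s - μ))).mp hz
    have hga : g a = μ := by
      have := hall a (Finset.mem_univ a); nlinarith [this]
    have hgb : g b = μ := by
      have := hall b (Finset.mem_univ b); nlinarith [this]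
    exact hab (hga.trans hgb.symm)
  have hdpos : (0:ℝ) < d := by exact_mod_cast hd
  have hden : 0 < 2 * (d : ℝ) * D := by positivity
  have hswap : ∀ τ : Fin d → Equiv.Perm (Fin n),
      ∑ s : Fin n, ∑ i : Fin d, (g s - g (τ i s))^2
        = ∑ i : Fin d, ∑ s : Fin n, (g s - g (τ i s))^2 := fun τ => Finset.sum_comm
  have hkey : ∑ s : Fin n, ∑ i : Fin d, (g s - g (σ i s))^2
      ≤ ∑ s : Fin n, ∑ i : Fin d, (g s - g (σ' i s))^2 + 4 * D := by
    rw [hswap σ, hswap σ']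
    have heq : ∑ i : Fin d, ∑ s : Fin n, (g s - g (σ i s))^2
        - ∑ i : Fin d, ∑ s : Fin n, (g s - g (σ' i s))^2
        = ∑ s : Fin n, (g s - g (σ i₀ s))^2 - ∑ s : Fin n, (g s - g (σ' i₀ s))^2 := by
      rw [← Finset.sum_sub_distrib]
      rw [Finset.sum_eq_single i₀]
      · intro i _ hi
        rw [hagree i hi]; ring
      · intro h; exact absurd (Finset.mem_univ i₀) h
    have h1 : ∑ s : Fin n, (g s - g (σ i₀ s))^2 ≤ 4 * D := sum_sq_perm_le n g (σ i₀)
    have h2 : 0 ≤ ∑ s : Fin n, (g s - g (σ' i₀ s))^2 :=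
      Finset.sum_nonneg fun s _ => sq_nonneg _
    linarith
  have step : (∑ s : Fin n, ∑ i : Fin d, (g s - g (σ i s))^2) / (2 * (d:ℝ) * D)
      ≤ (∑ s : Fin n, ∑ i : Fin d, (g s - g (σ' i s))^2 + 4 * D) / (2 * (d:ℝ) * D) := by
    gcongr
  calc (∑ s : Fin n, ∑ i : Fin d, (g s - g (σ i s))^2) / (2 * (d:ℝ) * D)
      ≤ (∑ s : Fin n, ∑ i : Fin d, (g s - g (σ' i s))^2 + 4 * D) / (2 * (d:ℝ) * D) := step
    _ = (∑ s : Fin n, ∑ i : Fin d, (g s - g (σ' i s))^2) / (2 * (d:ℝ) * D) + 2 / d := by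
        rw [add_div]
        congr 1
        field_simp
        ring

/-- The spectral gap of the 2d-regular multigraph on `Fin n` associated with a
d-tuple of permutations σ: the infimum of Rayleigh quotients over nonconstant
functions g : Fin n → ℝ. -/
noncomputable def permTupleSpectralGap (n d : ℕ) (σ : Fin d → Equiv.Perm (Fin n)) : ℝ :=
  sInf ((fun g : Fin n → ℝ =>
      (∑ s : Fin n, ∑ i : Fin d, (g s - g (σ i s)) ^ 2) /
        (2 * (d : ℝ) * ∑ s : Fin n, (g s - (∑ t : Fin n, g t) / (n : ℝ)) ^ 2)) ''
    {g | ¬ ∀ a b, g a = g b})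

private lemma gap_step (n d : ℕ) (hn : 2 ≤ n) (hd : 1 ≤ d)
    (σ σ' : Fin d → Equiv.Perm (Fin n)) (i₀ : Fin d)
    (hagree : ∀ i : Fin d, i ≠ i₀ → σ i = σ' i) :
    permTupleSpectralGap n d σ ≤ permTupleSpectralGap n d σ' + 2 / d := by
  have hg₀ : ¬ ∀ a b : Fin n, ((a : Fin n) : ℝ) = ((b : Fin n) : ℝ) := by
    intro h
    have := h ⟨0, by omega⟩ ⟨1, by omega⟩
    norm_num at this
  set f := fun (τ : Fin d → Equiv.Perm (Fin n)) (g : Fin n → ℝ) =>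
      (∑ s : Fin n, ∑ i : Fin d, (g s - g (τ i s)) ^ 2) /
        (2 * (d : ℝ) * ∑ s : Fin n, (g s - (∑ t : Fin n, g t) / (n : ℝ)) ^ 2) with hf
  have hbdd : ∀ τ : Fin d → Equiv.Perm (Fin n),
      BddBelow (f τ '' {g | ¬ ∀ a b, g a = g b}) := by
    intro τ
    refine ⟨0, ?_⟩
    rintro x ⟨g, _, rfl⟩
    apply div_nonneg
    · exact Finset.sum_nonneg fun s _ => Finset.sum_nonneg fun i _ => sq_nonneg _
    · have : (0:ℝ) ≤ ∑ s : Fin n, (g s - (∑ t : Fin n, g t) / (n : ℝ))^2 :=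
        Finset.sum_nonneg fun s _ => sq_nonneg _
      positivity
  have hne : (f σ' '' {g | ¬ ∀ a b, g a = g b}).Nonempty :=
    ⟨f σ' (fun s => (s : ℝ)), ⟨fun s => (s : ℝ), hg₀, rfl⟩⟩
  unfold permTupleSpectralGap
  rw [← sub_le_iff_le_add]
  apply le_csInf hne
  rintro b ⟨g, hg, rfl⟩
  have h1 : sInf (f σ '' {g | ¬ ∀ a b, g a = g b}) ≤ f σ g :=
    csInf_le (hbdd σ) ⟨g, hg, rfl⟩
  have h2 : f σ g ≤ f σ' g + 2 / d := rayleigh_diff n d hd σ σ' i₀ hagree g hg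
  linarith

/-- the spectral gap function on d-tuples of permutations changes by at
most 4/d when one permutation of the tuple is changed. -/
theorem permTupleSpectralGap_lipschitz (n d : ℕ) (hn : 2 ≤ n) (hd : 1 ≤ d)
    (σ σ' : Fin d → Equiv.Perm (Fin n)) (i₀ : Fin d)
    (hagree : ∀ i : Fin d, i ≠ i₀ → σ i = σ' i) :
    |permTupleSpectralGap n d σ - permTupleSpectralGap n d σ'| ≤ 4 / d := by
  have hdpos : (0:ℝ) < d := by exact_mod_cast hd
  have hagree' : ∀ i : Fin d, i ≠ i₀ → σ' i = σ i := fun i h => (hagree i h).symm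
  have h1 := gap_step n d hn hd σ σ' i₀ hagree
  have h2 := gap_step n d hn hd σ' σ i₀ hagree'
  have h24 : (2:ℝ)/d ≤ 4/d := by gcongr; norm_num
  rw [abs_sub_le_iff]
  constructor <;> linarith
end

section
/- Every real inner product space satisfies all the Wirtinger inequalities: for every k ≥ 4, every map g : ZMod k → F into a real inner product space F, and every j ∈ {1, …, k−1}, one has sin²(π/k) · Σ_{c ∈ ZMod k} ‖g(c+j) − g(c)‖² ≤ sin²(πj/k) · Σ_{c ∈ ZMod k} ‖g(c+1) − g(c)‖². -/
/-!
Coordinatewise in an orthonormal basis of the span of the values of `g`, it suffices to treat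
scalar `g`. Expanding in the characters `ψ (m c) = exp (2πi m c / k)` of `ZMod k`, Parseval turns
`k E_j(g)` into `∑ m, ‖ψ (j m) - 1‖² ‖ĝ m‖²` with `‖ψ n - 1‖² = 4 sin² (π n / k)`, so it suffices to
compare multipliers: `sin² (π / k) sin² (π j m / k) ≤ sin² (π j / k) sin² (π m / k)`. Replacing `j`
and `m` by `± j, ± m` modulo `k` one may assume `2 j, 2 m ≤ k`. If `j m ≤ k` this is the
monotonicity of `sin (j x) / sin x` on `[0, π / j]`; otherwise Jordan's inequality gives
`sin (π / k) ≤ π / k ≤ 4 / k < 4 j m / k² ≤ sin (π j / k) sin (π m / k)`.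
-/

open Real Finset

theorem sin_nat_mul_mul_sin_le (n : ℕ) {x y : ℝ} (hx : 0 ≤ x) (hxy : x ≤ y) (hny : n * y ≤ π) :
    sin (n * y) * sin x ≤ sin (n * x) * sin y := by
  induction n with
  | zero => simp
  | succ n ih =>
    push_cast at hny
    have hy : 0 ≤ y := hx.trans hxy
    have hny' : n * y ≤ π := by nlinarith
    have hyπ : y ≤ π := by nlinarith
    have hsx : 0 ≤ sin x := sin_nonneg_of_nonneg_of_le_pi hx (hxy.trans hyπ)
    have hsy : 0 ≤ sin y := sin_nonneg_of_nonneg_of_le_pi hy hyπ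
    have hcos_n : cos (n * y) ≤ cos (n * x) :=
      cos_le_cos_of_nonneg_of_le_pi (by positivity) hny' (by gcongr)
    have hsin_cos : sin (n * y) * cos y * sin x ≤ sin (n * x) * cos x * sin y := by
      rcases Nat.eq_zero_or_pos n with rfl | hn
      · simp
      have hn1 : (1 : ℝ) ≤ n := by exact_mod_cast hn
      have hcx : 0 ≤ cos x := cos_nonneg_of_mem_Icc ⟨by linarith [pi_pos], by nlinarith⟩
      have hsny : 0 ≤ sin (n * y) := sin_nonneg_of_nonneg_of_le_pi (by positivity) hny'
      calc sin (n * y) * cos y * sin x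
          ≤ sin (n * y) * sin x * cos x := by
            nlinarith [cos_le_cos_of_nonneg_of_le_pi hx hyπ hxy, mul_nonneg hsny hsx]
        _ ≤ sin (n * x) * sin y * cos x := mul_le_mul_of_nonneg_right (ih hny') hcx
        _ = sin (n * x) * cos x * sin y := by ring
    push_cast
    simp only [add_mul, one_mul, sin_add]
    nlinarith [mul_le_mul_of_nonneg_right hcos_n (mul_nonneg hsx hsy)]

theorem sin_sq_mul_sin_sq_le_of_mul_le {x : ℝ} {j m : ℕ} (hx : 0 ≤ x) (hj : 1 ≤ j) (hm : 1 ≤ m)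
    (hjm : j * m * x ≤ π) :
    sin x ^ 2 * sin (j * m * x) ^ 2 ≤ sin (j * x) ^ 2 * sin (m * x) ^ 2 := by
  have hj : (1 : ℝ) ≤ j := by exact_mod_cast hj
  have hm : (1 : ℝ) ≤ m := by exact_mod_cast hm
  have hxπ : x ≤ π := by nlinarith [one_le_mul_of_one_le_of_one_le hj hm]
  have h := sin_nat_mul_mul_sin_le j hx (le_mul_of_one_le_left hx hm) (by linarith)
  rw [← mul_assoc] at h
  have h0 : 0 ≤ sin (j * m * x) * sin x :=
    mul_nonneg (sin_nonneg_of_nonneg_of_le_pi (by positivity) hjm)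
      (sin_nonneg_of_nonneg_of_le_pi hx hxπ)
  nlinarith [pow_le_pow_left₀ h0 h 2]

theorem sin_div_le_sin_mul_sin_of_lt_mul {k j m : ℕ} (hj : 2 * j ≤ k) (hm : 2 * m ≤ k)
    (hjm : k < j * m) : sin (π / k) ≤ sin (π * j / k) * sin (π * m / k) := by
  have hk : (0 : ℝ) < k := by exact_mod_cast (by nlinarith : 0 < k)
  have hj : 2 * (j : ℝ) ≤ k := by exact_mod_cast hj
  have hm : 2 * (m : ℝ) ≤ k := by exact_mod_cast hm
  have hjm : (k : ℝ) < j * m := by exact_mod_cast hjm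
  have jordan : ∀ {n : ℝ}, 0 ≤ n → 2 * n ≤ k → 2 * n / k ≤ sin (π * n / k) := fun {n} hn h2n => by
    have := mul_le_sin (x := π * n / k) (by positivity) (by
      rw [div_le_div_iff₀ hk two_pos]; nlinarith [pi_pos])
    convert this using 1
    field_simp
  have hsj := jordan (by positivity) hj
  have hsm := jordan (by positivity) hm
  calc sin (π / k) ≤ π / k := sin_le (by positivity)
    _ ≤ 4 / k := by gcongr; exact pi_le_four
    _ ≤ (2 * j / k) * (2 * m / k) := by
        rw [div_mul_div_comm, div_le_div_iff₀ hk (by positivity)]; nlinarith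
    _ ≤ sin (π * j / k) * sin (π * m / k) := by
        gcongr
        exact (by positivity : (0 : ℝ) ≤ 2 * j / k).trans hsj

theorem sin_sq_mul_sin_sq_le_of_two_mul_le {k j m : ℕ} (hj : 2 * j ≤ k) (hm : 2 * m ≤ k) :
    sin (π / k) ^ 2 * sin (π * j * m / k) ^ 2 ≤ sin (π * j / k) ^ 2 * sin (π * m / k) ^ 2 := by
  rcases Nat.eq_zero_or_pos j with rfl | hj1
  · simp
  rcases Nat.eq_zero_or_pos m with rfl | hm1
  · simp
  rcases le_or_gt (j * m) k with hjm | hjm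
  · have hk : (0 : ℝ) < k := by exact_mod_cast (by omega : 0 < k)
    have hjm : (j : ℝ) * m ≤ k := by exact_mod_cast hjm
    have h := sin_sq_mul_sin_sq_le_of_mul_le (x := π / k) (by positivity) hj1 hm1
      (by rw [← mul_div_assoc, div_le_iff₀ hk, mul_comm π]; gcongr)
    convert h using 4 <;> ring
  · have hk : (1 : ℝ) ≤ k := by exact_mod_cast (by omega : 1 ≤ k)
    have hs : 0 ≤ sin (π / k) :=
      sin_nonneg_of_nonneg_of_le_pi (by positivity) (div_le_self pi_pos.le hk)
    calc sin (π / k) ^ 2 * sin (π * j * m / k) ^ 2 ≤ sin (π / k) ^ 2 :=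
          mul_le_of_le_one_right (sq_nonneg _) (sin_sq_le_one _)
      _ ≤ (sin (π * j / k) * sin (π * m / k)) ^ 2 :=
          pow_le_pow_left₀ hs (sin_div_le_sin_mul_sin_of_lt_mul hj hm hjm) 2
      _ = sin (π * j / k) ^ 2 * sin (π * m / k) ^ 2 := mul_pow _ _ _

namespace ZMod

open AddChar
open scoped InnerProductSpace

variable {N : ℕ} [NeZero N]

theorem exists_two_mul_le_and_eq_or_eq_neg (a : ZMod N) :
    ∃ n : ℕ, 2 * n ≤ N ∧ (a = n ∨ a = -n) := by
  refine ⟨a.valMinAbs.natAbs, ?_, ?_⟩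
  · have := a.natAbs_valMinAbs_le
    omega
  · rw [natCast_natAbs_valMinAbs]
    split_ifs
    · exact .inl rfl
    · exact .inr (neg_neg a).symm

theorem norm_stdAddChar_natCast_sub_one_sq (n : ℕ) :
    ‖stdAddChar (n : ZMod N) - 1‖ ^ 2 = 4 * sin (π * n / N) ^ 2 := by
  rw [← Int.cast_natCast, stdAddChar_coe,
    show 2 * π * Complex.I * ((n : ℤ) : ℂ) / N = Complex.I * ((2 * π * n / N : ℝ) : ℂ) by
      push_cast; ring,
    Complex.norm_exp_I_mul_ofReal_sub_one, Real.norm_eq_abs, sq_abs]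
  ring_nf

theorem norm_stdAddChar_neg_sub_one (a : ZMod N) :
    ‖stdAddChar (-a) - 1‖ = ‖stdAddChar a - 1‖ := by
  rw [map_neg_eq_conj, ← Complex.norm_conj, map_sub, Complex.conj_conj, map_one]

theorem norm_stdAddChar_sub_one_sq_mul_le (a b : ZMod N) :
    ‖stdAddChar (1 : ZMod N) - 1‖ ^ 2 * ‖stdAddChar (a * b) - 1‖ ^ 2 ≤
      ‖stdAddChar a - 1‖ ^ 2 * ‖stdAddChar b - 1‖ ^ 2 := by
  obtain ⟨j, hj, ha⟩ := exists_two_mul_le_and_eq_or_eq_neg a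
  obtain ⟨m, hm, hb⟩ := exists_two_mul_le_and_eq_or_eq_neg b
  have hab : ‖stdAddChar (a * b) - 1‖ = ‖stdAddChar ((j * m : ℕ) : ZMod N) - 1‖ := by
    rcases ha with rfl | rfl <;> rcases hb with rfl | rfl <;>
      simp [norm_stdAddChar_neg_sub_one]
  have ha : ‖stdAddChar a - 1‖ = ‖stdAddChar (j : ZMod N) - 1‖ := by
    rcases ha with rfl | rfl <;> simp [norm_stdAddChar_neg_sub_one]
  have hb : ‖stdAddChar b - 1‖ = ‖stdAddChar (m : ZMod N) - 1‖ := by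
    rcases hb with rfl | rfl <;> simp [norm_stdAddChar_neg_sub_one]
  rw [hab, ha, hb, ← Nat.cast_one (R := ZMod N), norm_stdAddChar_natCast_sub_one_sq,
    norm_stdAddChar_natCast_sub_one_sq, norm_stdAddChar_natCast_sub_one_sq,
    norm_stdAddChar_natCast_sub_one_sq]
  push_cast
  rw [mul_one, ← mul_assoc π]
  linear_combination 16 * sin_sq_mul_sin_sq_le_of_two_mul_le hj hm

variable {E : Type*}

theorem dft_comp_add_right [AddCommGroup E] [Module ℂ E] (Φ : ZMod N → E) (a : ZMod N) :
    𝓕 (fun c ↦ Φ (c + a)) = fun m ↦ stdAddChar (a * m) • 𝓕 Φ m := by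
  ext m
  rw [dft_apply, dft_apply, smul_sum]
  refine Fintype.sum_equiv (Equiv.addRight a) _ _ fun c ↦ ?_
  rw [Equiv.coe_addRight, smul_smul, ← map_add_eq_mul]
  congr 2
  ring

theorem sum_norm_sq_dft [NormedAddCommGroup E] [InnerProductSpace ℂ E] (Φ : ZMod N → E) :
    ∑ m, ‖𝓕 Φ m‖ ^ 2 = N * ∑ c, ‖Φ c‖ ^ 2 := by
  have h : ∑ m, ⟪𝓕 Φ m, 𝓕 Φ m⟫_ℂ = N * ∑ c, ⟪Φ c, Φ c⟫_ℂ :=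
    calc ∑ m, ⟪𝓕 Φ m, 𝓕 Φ m⟫_ℂ
        = ∑ m, ∑ c, ⟪stdAddChar (-(c * m)) • Φ c, 𝓕 Φ m⟫_ℂ := by
          refine sum_congr rfl fun m _ ↦ ?_
          rw [← sum_inner, ← dft_apply]
      _ = ∑ c, ⟪Φ c, ∑ m, stdAddChar (-(m * -c)) • 𝓕 Φ m⟫_ℂ := by
          rw [sum_comm]
          refine sum_congr rfl fun c _ ↦ ?_
          simp [map_neg_eq_conj, mul_comm]
      _ = N * ∑ c, ⟪Φ c, Φ c⟫_ℂ := by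
          simp only [← dft_apply, dft_dft, neg_neg, inner_smul_right, mul_sum]
  simp only [inner_self_eq_norm_sq_to_K] at h
  norm_cast at h
  rw [← RCLike.ofReal_natCast, ← RCLike.ofReal_mul] at h
  exact RCLike.ofReal_injective h

theorem natCast_mul_sum_norm_sq_sub [NormedAddCommGroup E] [InnerProductSpace ℂ E]
    (Φ : ZMod N → E) (a : ZMod N) :
    N * ∑ c, ‖Φ (c + a) - Φ c‖ ^ 2 = ∑ m, ‖stdAddChar (a * m) - 1‖ ^ 2 * ‖𝓕 Φ m‖ ^ 2 := by
  have h : 𝓕 (fun c ↦ Φ (c + a) - Φ c) = fun m ↦ (stdAddChar (a * m) - 1) • 𝓕 Φ m := by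
    ext m
    rw [show (fun c ↦ Φ (c + a) - Φ c) = (fun c ↦ Φ (c + a)) - Φ from rfl, map_sub,
      dft_comp_add_right, Pi.sub_apply, sub_smul, one_smul]
  rw [← sum_norm_sq_dft, h]
  simp only [norm_smul, mul_pow]

theorem norm_stdAddChar_sub_one_sq_mul_sum_le [NormedAddCommGroup E] [InnerProductSpace ℂ E]
    (Φ : ZMod N → E) (a : ZMod N) :
    ‖stdAddChar (1 : ZMod N) - 1‖ ^ 2 * ∑ c, ‖Φ (c + a) - Φ c‖ ^ 2 ≤
      ‖stdAddChar a - 1‖ ^ 2 * ∑ c, ‖Φ (c + 1) - Φ c‖ ^ 2 := by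
  refine le_of_mul_le_mul_left ?_ (Nat.cast_pos.2 (NeZero.pos N) : (0 : ℝ) < N)
  rw [mul_left_comm, natCast_mul_sum_norm_sq_sub, mul_left_comm, natCast_mul_sum_norm_sq_sub,
    mul_sum, mul_sum]
  refine sum_le_sum fun m _ ↦ ?_
  rw [← mul_assoc, ← mul_assoc, one_mul]
  exact mul_le_mul_of_nonneg_right (norm_stdAddChar_sub_one_sq_mul_le a m) (by positivity)

end ZMod

theorem sin_sq_mul_sum_sq_sub_le {N : ℕ} [NeZero N] (f : ZMod N → ℝ) (j : ℕ) :
    sin (π / N) ^ 2 * ∑ c, (f (c + j) - f c) ^ 2 ≤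
      sin (π * j / N) ^ 2 * ∑ c, (f (c + 1) - f c) ^ 2 := by
  have h := ZMod.norm_stdAddChar_sub_one_sq_mul_sum_le (fun c ↦ (f c : ℂ)) (j : ZMod N)
  have h1 := ZMod.norm_stdAddChar_natCast_sub_one_sq (N := N) 1
  rw [Nat.cast_one, Nat.cast_one, mul_one] at h1
  simp only [h1, ZMod.norm_stdAddChar_natCast_sub_one_sq, ← Complex.ofReal_sub, Complex.norm_real,
    Real.norm_eq_abs, sq_abs] at h
  linarith

theorem exists_sq_norm_sub_eq_sum_sq {ι F : Type*} [Finite ι] [NormedAddCommGroup F]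
    [InnerProductSpace ℝ F] (g : ι → F) :
    ∃ (n : ℕ) (f : Fin n → ι → ℝ), ∀ x y, ‖g x - g y‖ ^ 2 = ∑ i, (f i x - f i y) ^ 2 := by
  let V := Submodule.span ℝ (Set.range g)
  have : FiniteDimensional ℝ V := FiniteDimensional.span_of_finite ℝ (Set.finite_range g)
  let b := stdOrthonormalBasis ℝ V
  let G : ι → V := fun x ↦ ⟨g x, Submodule.subset_span ⟨x, rfl⟩⟩
  refine ⟨_, fun i x ↦ b.repr (G x) i, fun x y ↦ ?_⟩
  have : ‖g x - g y‖ = ‖b.repr (G x) - b.repr (G y)‖ := by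
    rw [← map_sub, b.repr.norm_map]
    rfl
  rw [this, EuclideanSpace.norm_sq_eq]
  simp [Real.norm_eq_abs, sq_abs]

theorem inner_product_space_satisfies_wirtinger_general
    (F : Type*) [NormedAddCommGroup F] [InnerProductSpace ℝ F]
    (k : ℕ) [NeZero k]
    (g : ZMod k → F) (j : ℕ) :
    Real.sin (Real.pi / k) ^ 2 * ∑ c : ZMod k, ‖g (c + (j : ZMod k)) - g c‖ ^ 2 ≤
      Real.sin (Real.pi * j / k) ^ 2 * ∑ c : ZMod k, ‖g (c + 1) - g c‖ ^ 2 := by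
  obtain ⟨n, f, hf⟩ := exists_sq_norm_sub_eq_sum_sq g
  simp only [hf]
  rw [sum_comm, mul_sum, sum_comm, mul_sum]
  exact sum_le_sum fun i _ ↦ sin_sq_mul_sum_sq_sub_le (f i) j

/-- every real inner product space satisfies all the Wirtinger
inequalities Wir_k, k ≥ 4. -/
theorem inner_product_space_satisfies_wirtinger
    (F : Type*) [NormedAddCommGroup F] [InnerProductSpace ℝ F]
    (k : ℕ) [NeZero k] (hk : 4 ≤ k)
    (g : ZMod k → F) (j : ℕ) (hj1 : 1 ≤ j) (hj2 : j ≤ k - 1) :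
    Real.sin (Real.pi / k) ^ 2 * ∑ c : ZMod k, ‖g (c + (j : ZMod k)) - g c‖ ^ 2 ≤
      Real.sin (Real.pi * j / k) ^ 2 * ∑ c : ZMod k, ‖g (c + 1) - g c‖ ^ 2 :=
  inner_product_space_satisfies_wirtinger_general F k g j
end

section
/- Let k ≥ 3 and let Y be a metric space satisfying the Wirtinger inequality Wir_k. Then the Gromov bottom of the spectrum of the k-cycle with values in Y is at least that of ℝ: for every map g : ZMod k → Y, Σ_{c ∈ ZMod k} d(g(c+1), g(c))² ≥ (1 − cos(2π/k)) · (1/k) · Σ_{(c, c') ∈ ZMod k × ZMod k} d(g(c), g(c'))². -/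
open Finset Real

lemma sum_range_eq_zmod {k : ℕ} [NeZero k] (f : ZMod k → ℝ) :
    ∑ i ∈ Finset.range k, f (i : ZMod k) = ∑ j : ZMod k, f j := by
  refine Finset.sum_nbij' (fun i => ((i : ℕ) : ZMod k)) (fun j => ZMod.val j)
    ?_ ?_ ?_ ?_ ?_
  · intro i _; exact Finset.mem_univ _
  · intro j _; exact Finset.mem_range.mpr (ZMod.val_lt j)
  · intro i hi; exact ZMod.val_cast_of_lt (Finset.mem_range.mp hi)
  · intro j _; exact ZMod.natCast_zmod_val j
  · intro i _; rfl

lemma sum_cos_eq_zero {k : ℕ} [NeZero k] (hk : 3 ≤ k) :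
    ∑ j ∈ Finset.range k, Real.cos (2 * Real.pi * j / k) = 0 := by
  have hk0 : (0:ℝ) < k := by positivity
  have hkc : (k : ℂ) ≠ 0 := Nat.cast_ne_zero.mpr (NeZero.ne k)
  set z : ℂ := Complex.exp (2 * Real.pi / k * Complex.I) with hz
  have hzk : z ^ k = 1 := by
    rw [hz, ← Complex.exp_nat_mul]
    have h1 : (k : ℂ) * (2 * Real.pi / k * Complex.I) = 2 * Real.pi * Complex.I := by
      field_simp [hkc]
    rw [h1]
    simpa using Complex.exp_int_mul_two_pi_mul_I 1
  have hz1 : z ≠ 1 := by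
    rw [hz, Ne, Complex.exp_eq_one_iff]
    rintro ⟨n, hn⟩
    have him : (2 * Real.pi / k : ℝ) = n * (2 * Real.pi) := by
      have := congrArg Complex.im hn
      simpa using this
    have hpi := Real.pi_pos
    have hk3 : (3:ℝ) ≤ k := by exact_mod_cast hk
    have hpos : 0 < 2 * Real.pi / (k:ℝ) := by positivity
    rcases le_or_gt (n : ℝ) 0 with h | h
    · have hr : (n:ℝ) * (2 * Real.pi) ≤ 0 :=
        mul_nonpos_of_nonpos_of_nonneg h (by positivity)
      linarith
    · have hn1 : (1:ℝ) ≤ n := by exact_mod_cast (by exact_mod_cast h : (0:ℤ) < n)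
      have : 2 * Real.pi / k < 2 * Real.pi := by
        rw [div_lt_iff₀ hk0]; nlinarith
      nlinarith
  have hgeom : ∑ j ∈ Finset.range k, z ^ j = 0 := by
    rw [geom_sum_eq hz1, hzk, sub_self, zero_div]
  have hre : ∀ j : ℕ, (z ^ j).re = Real.cos (2 * Real.pi * j / k) := by
    intro j
    rw [hz, ← Complex.exp_nat_mul]
    have h2 : (j : ℂ) * (2 * Real.pi / k * Complex.I)
        = ((2 * Real.pi * j / k : ℝ) : ℂ) * Complex.I := by
      push_cast; ring
    rw [h2, Complex.exp_ofReal_mul_I_re]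
  calc ∑ j ∈ Finset.range k, Real.cos (2 * Real.pi * j / k)
      = (∑ j ∈ Finset.range k, z ^ j).re := by
        rw [Complex.re_sum]; exact Finset.sum_congr rfl fun j _ => (hre j).symm
    _ = 0 := by rw [hgeom]; rfl

lemma sum_sin_sq {k : ℕ} [NeZero k] (hk : 3 ≤ k) :
    ∑ j ∈ Finset.range k, Real.sin (Real.pi * j / k) ^ 2 = k / 2 := by
  have h : ∀ j ∈ Finset.range k, Real.sin (Real.pi * j / k) ^ 2
      = 1 / 2 - Real.cos (2 * Real.pi * j / k) / 2 := by
    intro j _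
    rw [Real.sin_sq_eq_half_sub]
    ring_nf
  rw [Finset.sum_congr rfl h, Finset.sum_sub_distrib]
  have h2 : ∑ x ∈ Finset.range k, Real.cos (2 * Real.pi * x / k) / 2
      = (∑ x ∈ Finset.range k, Real.cos (2 * Real.pi * x / k)) / 2 :=
    (Finset.sum_div _ _ _).symm
  rw [h2, sum_cos_eq_zero hk]
  simp [Finset.sum_const, Finset.card_range]
  ring

/-- if Y satisfies the Wirtinger inequality Wir_k, then the Gromov
bottom of the spectrum of the k-cycle with values in Y is at least that of ℝ. -/
theorem wirtinger_implies_gromov_spectral_bound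
    (Y : Type*) [MetricSpace Y] (k : ℕ) [NeZero k] (hk : 3 ≤ k)
    (hWir : ∀ (g : ZMod k → Y) (j : ℕ), 1 ≤ j → j ≤ k - 1 →
      Real.sin (Real.pi / k) ^ 2 *
          ∑ c : ZMod k, dist (g (c + (j : ZMod k))) (g c) ^ 2 ≤
        Real.sin (Real.pi * j / k) ^ 2 *
          ∑ c : ZMod k, dist (g (c + 1)) (g c) ^ 2)
    (g : ZMod k → Y) :
    (1 - Real.cos (2 * Real.pi / k)) *
        ((1 / (k : ℝ)) * ∑ c : ZMod k, ∑ c' : ZMod k, dist (g c) (g c') ^ 2) ≤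
      ∑ c : ZMod k, dist (g (c + 1)) (g c) ^ 2 := by
  have hk0 : (0:ℝ) < k := by positivity
  set E : ℝ := ∑ c : ZMod k, dist (g (c + 1)) (g c) ^ 2 with hE
  set S : ℕ → ℝ := fun j => ∑ c : ZMod k, dist (g (c + (j : ZMod k))) (g c) ^ 2 with hS
  set D : ℝ := ∑ c : ZMod k, ∑ c' : ZMod k, dist (g c) (g c') ^ 2 with hD
  -- Step A : D = ∑ j ∈ range k, S j
  have hA : D = ∑ j ∈ Finset.range k, S j := by
    have h1 : D = ∑ j : ZMod k, ∑ c : ZMod k, dist (g (c + j)) (g c) ^ 2 := by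
      rw [hD]
      have h2 : ∀ c : ZMod k, ∑ c' : ZMod k, dist (g c) (g c') ^ 2
          = ∑ j : ZMod k, dist (g (c + j)) (g c) ^ 2 := by
        intro c
        rw [← Fintype.sum_equiv (Equiv.addLeft c)
          (fun j => dist (g c) (g (c + j)) ^ 2) (fun c' => dist (g c) (g c') ^ 2)
          (fun j => rfl)]
        exact Finset.sum_congr rfl fun j _ => by rw [dist_comm]
      rw [Finset.sum_congr rfl fun c _ => h2 c, Finset.sum_comm]
    rw [h1, ← sum_range_eq_zmod (fun j => ∑ c : ZMod k, dist (g (c + j)) (g c) ^ 2)]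
  -- Step B
  have hB : Real.sin (Real.pi / k) ^ 2 * D ≤ ((k : ℝ) / 2) * E := by
    rw [hA, Finset.mul_sum]
    calc ∑ j ∈ Finset.range k, Real.sin (Real.pi / k) ^ 2 * S j
        ≤ ∑ j ∈ Finset.range k, Real.sin (Real.pi * j / k) ^ 2 * E := by
          refine Finset.sum_le_sum fun j hj => ?_
          rcases Nat.eq_zero_or_pos j with rfl | hj1
          · have hS0 : S 0 = 0 := by
              simp [hS]
            have hE0 : (0:ℝ) ≤ Real.sin (Real.pi * 0 / k) ^ 2 * E := by
              have : (0:ℝ) ≤ E := Finset.sum_nonneg fun c _ => sq_nonneg _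
              positivity
            simpa [hS0] using hE0
          · exact hWir g j hj1 (by have := Finset.mem_range.mp hj; omega)
      _ = ((k : ℝ) / 2) * E := by
          rw [← Finset.sum_mul, sum_sin_sq hk]
  -- Step C
  have hcos : 1 - Real.cos (2 * Real.pi / k) = 2 * Real.sin (Real.pi / k) ^ 2 := by
    rw [Real.sin_sq_eq_half_sub]
    have : 2 * (Real.pi / k) = 2 * Real.pi / k := by ring
    rw [this]; ring
  rw [hcos]
  have hmul := mul_le_mul_of_nonneg_left hB (show (0:ℝ) ≤ 2 / k by positivity)
  have h2 : (2 / (k:ℝ)) * ((k:ℝ) / 2 * E) = E := by field_simp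
  have h3 : 2 * Real.sin (Real.pi / k) ^ 2 * (1 / (k:ℝ) * D)
      = 2 / (k:ℝ) * (Real.sin (Real.pi / k) ^ 2 * D) := by ring
  rw [h3]; linarith
end

section
/- Let Γ be a group generated by a finite set S. Suppose that every affine isometric action of Γ on a complex Hilbert space has a fixed point; i.e. for every complex Hilbert space H, every unitary representation ρ of Γ on H and every map η : Γ → H satisfying η(g g') = ρ(g)(η(g')) + η(g) for all g, g', there exists v ∈ H with ρ(g) v + η(g) = v for all g ∈ Γ. Then Γ has Kazhdan's property (T): for every complex Hilbert space H and every unitary representation ρ of Γ on H having no nonzero invariant vector, there exists ε > 0 such that every unit vector ξ ∈ H satisfies max_{s ∈ S} ‖ρ(s) ξ − ξ‖ ≥ ε. -/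
/-!
If property (T) fails, there are unit vectors `ξₙ` moved by less than `4⁻ⁿ` by every generator,
hence by at most `C_g 4⁻ⁿ` by each `g ∈ Γ`. For `xₙ = 2ⁿ ξₙ` the map `g ↦ (ρ g xₙ - xₙ)ₙ` is then a
cocycle with values in `ℓ²(ℕ, H)` for the diagonal representation. If `v` is a fixed point of the
corresponding affine action, each `vₙ + xₙ` is `ρ`-invariant, so `vₙ = -xₙ`; but `‖xₙ‖ = 2ⁿ` is
unbounded, contradicting `v ∈ ℓ²`.
-/

open scoped ENNReal

namespace lp

variable {𝕜 ι E : Type*} [NormedRing 𝕜] [NormedAddCommGroup E] [Module 𝕜 E] [IsBoundedSMul 𝕜 E]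
  {p : ℝ≥0∞} [Fact (1 ≤ p)]

def diagonalMap (e : E ≃ₗᵢ[𝕜] E) : lp (fun _ : ι => E) p ≃ₗᵢ[𝕜] lp (fun _ : ι => E) p where
  toFun f := ⟨fun i => e (f i), (lp.memℓp f).mono' fun i => (e.norm_map _).le⟩
  invFun f := ⟨fun i => e.symm (f i), (lp.memℓp f).mono' fun i => (e.symm.norm_map _).le⟩
  map_add' f g := by ext i; exact map_add e _ _
  map_smul' c f := by ext i; simp
  left_inv f := by ext i; simp
  right_inv f := by ext i; simp
  norm_map' f := by
    rcases p.trichotomy with hp | rfl | hp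
    · exact absurd (Fact.out : 1 ≤ p) (by simp [hp])
    · simp [lp.norm_eq_ciSup]
    · simp [lp.norm_eq_tsum_rpow hp]

def diagonalHom : (E ≃ₗᵢ[𝕜] E) →* (lp (fun _ : ι => E) p ≃ₗᵢ[𝕜] lp (fun _ : ι => E) p) where
  toFun := diagonalMap
  map_one' := by ext f i; rfl
  map_mul' e e' := by ext f i; rfl

end lp

theorem memℓp_of_norm_le_geometric {E : Type*} [NormedAddCommGroup E] {f : ℕ → E} {C r : ℝ}
    (hr0 : 0 ≤ r) (hr1 : r < 1) (hf : ∀ n, ‖f n‖ ≤ C * r ^ n) {p : ℝ≥0∞} (hp : 1 ≤ p) : Memℓp f p := by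
  refine (Memℓp.mono ?_ hf).of_exponent_ge hp
  apply memℓp_gen
  simpa using ((summable_geometric_of_lt_one hr0 hr1).mul_left C).norm

section Displacement

variable {Γ 𝕜 E : Type*} [Group Γ] [Semiring 𝕜] [SeminormedAddCommGroup E] [Module 𝕜 E]

theorem exists_norm_apply_sub_le_mul_of_mem_closure (ρ : Γ →* (E ≃ₗᵢ[𝕜] E)) {S : Set Γ} {g : Γ}
    (hg : g ∈ Subgroup.closure S) :
    ∃ C : ℝ, ∀ (ξ : E) (δ : ℝ), (∀ s ∈ S, ‖ρ s ξ - ξ‖ ≤ δ) → ‖ρ g ξ - ξ‖ ≤ C * δ := by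
  induction hg using Subgroup.closure_induction with
  | mem s hs => exact ⟨1, fun ξ δ hξ => by simpa using hξ s hs⟩
  | one => exact ⟨0, fun ξ δ _ => by simp⟩
  | mul g h _ _ ihg ihh =>
    obtain ⟨Cg, hCg⟩ := ihg
    obtain ⟨Ch, hCh⟩ := ihh
    refine ⟨Cg + Ch, fun ξ δ hξ => ?_⟩
    have hsplit : ρ (g * h) ξ - ξ = ρ g (ρ h ξ - ξ) + (ρ g ξ - ξ) := by
      rw [map_mul, LinearIsometryEquiv.coe_mul, Function.comp_apply, map_sub]; abel
    calc ‖ρ (g * h) ξ - ξ‖ ≤ ‖ρ h ξ - ξ‖ + ‖ρ g ξ - ξ‖ := by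
          simpa only [hsplit, LinearIsometryEquiv.norm_map] using norm_add_le (ρ g (ρ h ξ - ξ)) _
      _ ≤ Ch * δ + Cg * δ := add_le_add (hCh ξ δ hξ) (hCg ξ δ hξ)
      _ = (Cg + Ch) * δ := by ring
  | inv g _ ihg =>
    obtain ⟨C, hC⟩ := ihg
    refine ⟨C, fun ξ δ hξ => ?_⟩
    calc ‖ρ g⁻¹ ξ - ξ‖ = ‖ρ g (ρ g⁻¹ ξ - ξ)‖ := ((ρ g).norm_map _).symm
      _ = ‖ρ g ξ - ξ‖ := by
          rw [map_sub, ← Function.comp_apply (f := ρ g), ← LinearIsometryEquiv.coe_mul, ← map_mul,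
            mul_inv_cancel, map_one, LinearIsometryEquiv.coe_one, id, norm_sub_rev]
      _ ≤ C * δ := hC ξ δ hξ

end Displacement

section Coboundary

variable {Γ 𝕜 ι E : Type*} [Group Γ] [NormedRing 𝕜] [NormedAddCommGroup E] [Module 𝕜 E]
  [IsBoundedSMul 𝕜 E] {p : ℝ≥0∞} [Fact (1 ≤ p)]

def lpCoboundary (ρ : Γ →* (E ≃ₗᵢ[𝕜] E)) (x : ι → E)
    (hx : ∀ g, Memℓp (fun i => ρ g (x i) - x i) p) (g : Γ) : lp (fun _ : ι => E) p :=
  ⟨fun i => ρ g (x i) - x i, hx g⟩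

theorem lpCoboundary_mul (ρ : Γ →* (E ≃ₗᵢ[𝕜] E)) (x : ι → E)
    (hx : ∀ g, Memℓp (fun i => ρ g (x i) - x i) p) (g g' : Γ) :
    lpCoboundary ρ x hx (g * g') = lp.diagonalHom (ρ g) (lpCoboundary ρ x hx g') +
      lpCoboundary ρ x hx g := by
  ext i
  change ρ (g * g') (x i) - x i = ρ g (ρ g' (x i) - x i) + (ρ g (x i) - x i)
  rw [map_mul, LinearIsometryEquiv.coe_mul, Function.comp_apply, map_sub]
  abel

theorem memℓp_of_lpCoboundary_fixed (ρ : Γ →* (E ≃ₗᵢ[𝕜] E))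
    (hρ : ∀ ξ : E, (∀ g, ρ g ξ = ξ) → ξ = 0) (x : ι → E)
    (hx : ∀ g, Memℓp (fun i => ρ g (x i) - x i) p) (v : lp (fun _ : ι => E) p)
    (hv : ∀ g, lp.diagonalHom (ρ g) v + lpCoboundary ρ x hx g = v) :
    Memℓp x p := by
  have hvx : ∀ i, v i + x i = 0 := fun i => hρ _ fun g => by
    have hvi : ρ g (v i) + (ρ g (x i) - x i) = v i := congr($(hv g) i)
    calc ρ g (v i + x i) = ρ g (v i) + (ρ g (x i) - x i) + x i := by rw [map_add]; abel
      _ = v i + x i := by rw [hvi]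
  have : x = -⇑v := funext fun i => eq_neg_of_add_eq_zero_right (hvx i)
  exact this ▸ (lp.memℓp v).neg

end Coboundary

/-- if every affine isometric action of a finitely generated group Γ
on a complex Hilbert space has a fixed point, then Γ has Kazhdan's property (T). -/
theorem fixed_point_property_implies_property_T
    (Γ : Type*) [Group Γ] (S : Finset Γ) (hS : Subgroup.closure (S : Set Γ) = ⊤)
    (hFH : ∀ (H : Type) [NormedAddCommGroup H] [InnerProductSpace ℂ H] [CompleteSpace H]
      (ρ : Γ →* (H ≃ₗᵢ[ℂ] H)) (η : Γ → H),
      (∀ g g' : Γ, η (g * g') = ρ g (η g') + η g) →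
        ∃ v : H, ∀ g : Γ, ρ g v + η g = v) :
    ∀ (H : Type) [NormedAddCommGroup H] [InnerProductSpace ℂ H] [CompleteSpace H]
      (ρ : Γ →* (H ≃ₗᵢ[ℂ] H)),
      (∀ ξ : H, (∀ g : Γ, ρ g ξ = ξ) → ξ = 0) →
      ∃ ε : ℝ, 0 < ε ∧ ∀ ξ : H, ‖ξ‖ = 1 → ∃ s ∈ S, ε ≤ ‖ρ s ξ - ξ‖ := by
  intro H _ _ _ ρ hρ
  by_contra! hT
  choose ξ hξ_norm hξ_almost using fun n : ℕ => hT ((1 / 4) ^ n) (by positivity)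
  set x : ℕ → H := fun n => (2 : ℂ) ^ n • ξ n
  have hx : ∀ g, Memℓp (fun n => ρ g (x n) - x n) 2 := fun g => by
    obtain ⟨C, hC⟩ := exists_norm_apply_sub_le_mul_of_mem_closure ρ (hS ▸ Subgroup.mem_top g)
    refine memℓp_of_norm_le_geometric (C := C) (r := 1 / 2) (by norm_num) (by norm_num)
      (fun n => ?_) one_le_two
    calc ‖ρ g (x n) - x n‖ = 2 ^ n * ‖ρ g (ξ n) - ξ n‖ := by simp [x, ← smul_sub, norm_smul]
      _ ≤ 2 ^ n * (C * (1 / 4) ^ n) := by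
          gcongr; exact hC _ _ fun s hs => (hξ_almost n s hs).le
      _ = C * (1 / 2) ^ n := by
          have h : (2 : ℝ) ^ n * (1 / 2) ^ n = 1 := by rw [← mul_pow]; norm_num
          rw [show (1 / 4 : ℝ) = 1 / 2 * (1 / 2) by norm_num, mul_pow]
          linear_combination C * (1 / 2 : ℝ) ^ n * h
  obtain ⟨v, hv⟩ := hFH _ (lp.diagonalHom.comp ρ) (lpCoboundary ρ x hx) (lpCoboundary_mul ρ x hx)
  obtain ⟨M, hM⟩ := ((memℓp_of_lpCoboundary_fixed ρ hρ x hx v hv).of_exponent_ge le_top).bddAbove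
  obtain ⟨n, hn⟩ := pow_unbounded_of_one_lt M (one_lt_two : (1 : ℝ) < 2)
  exact hn.not_ge (hM ⟨n, by simp [x, norm_smul, hξ_norm]⟩)
end
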